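/- Let M be a cocommutative bialgebra over R with an R-valued bicharacter r. Define R(a⊗b) = Σ a'⊗b' r(a''⊗b''). Then R is an R-matrix for the bialgebra M viewed as a ring: it is compatible with 1, compatible with multiplication, and satisfies the Yang-Baxter equation R₁₂R₁₃R₂₃ = R₂₃R₁₃R₁₂. -/

import Mathlib

open TensorProduct Coalgebra

/-- An `R`-valued bicharacter of a bialgebra `M` over `R`. -/
structure Bicharacter (R M : Type) [CommRing R] [Ring M] [Bialgebra R M] where
  toFun : M →ₗ[R] M →ₗ[R] R
  one_left : ∀ a : M, toFun 1 a = counit (R := R) a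
  one_right : ∀ a : M, toFun a 1 = counit (R := R) a
  mul_left : ∀ (a b c : M) (ι : Type) (t : Finset ι) (c₁ c₂ : ι → M),
    comul (R := R) c = ∑ i ∈ t, c₁ i ⊗ₜ[R] c₂ i →
    toFun (a * b) c = ∑ i ∈ t, toFun a (c₁ i) * toFun b (c₂ i)
  mul_right : ∀ (a b c : M) (ι : Type) (t : Finset ι) (a₁ a₂ : ι → M),
    comul (R := R) a = ∑ i ∈ t, a₁ i ⊗ₜ[R] a₂ i →
    toFun a (b * c) = ∑ i ∈ t, toFun (a₁ i) b * toFun (a₂ i) c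

section Maps

variable (R M : Type) [CommRing R] [AddCommGroup M] [Module R M]

/-- A map `M ⊗ M → M ⊗ M` acting on factors 1,2 of `M ⊗ M ⊗ M`. -/
noncomputable def map12 (f : M ⊗[R] M →ₗ[R] M ⊗[R] M) :
    M ⊗[R] (M ⊗[R] M) →ₗ[R] M ⊗[R] (M ⊗[R] M) :=
  (TensorProduct.assoc R M M M).toLinearMap ∘ₗ f.rTensor M ∘ₗ
    (TensorProduct.assoc R M M M).symm.toLinearMap

/-- A map `M ⊗ M → M ⊗ M` acting on factors 2,3 of `M ⊗ M ⊗ M`. -/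
noncomputable def map23 (f : M ⊗[R] M →ₗ[R] M ⊗[R] M) :
    M ⊗[R] (M ⊗[R] M) →ₗ[R] M ⊗[R] (M ⊗[R] M) :=
  f.lTensor M

/-- The map exchanging factors 2,3 of `M ⊗ M ⊗ M`. -/
noncomputable def swap23 : M ⊗[R] (M ⊗[R] M) →ₗ[R] M ⊗[R] (M ⊗[R] M) :=
  (TensorProduct.comm R M M).toLinearMap.lTensor M

/-- A map `M ⊗ M → M ⊗ M` acting on factors 1,3 of `M ⊗ M ⊗ M`. -/
noncomputable def map13 (f : M ⊗[R] M →ₗ[R] M ⊗[R] M) :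
    M ⊗[R] (M ⊗[R] M) →ₗ[R] M ⊗[R] (M ⊗[R] M) :=
  swap23 R M ∘ₗ map12 R M f ∘ₗ swap23 R M

/-- A multiplication `M ⊗ M → M` applied to factors 1,2 of `M ⊗ M ⊗ M`. -/
noncomputable def mul12 (m : M ⊗[R] M →ₗ[R] M) :
    M ⊗[R] (M ⊗[R] M) →ₗ[R] M ⊗[R] M :=
  m.rTensor M ∘ₗ (TensorProduct.assoc R M M M).symm.toLinearMap

/-- A multiplication `M ⊗ M → M` applied to factors 2,3 of `M ⊗ M ⊗ M`. -/
noncomputable def mul23 (m : M ⊗[R] M →ₗ[R] M) :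
    M ⊗[R] (M ⊗[R] M) →ₗ[R] M ⊗[R] M :=
  m.lTensor M

end Maps


/-!
Let `φ ⇀ c = ∑ c₁ φ(c₂)` be the hit action of the convolution algebra `Hom(C, R)` on a
coalgebra `C`. Viewing `r` as a functional on `M ⊗ M`, the hypothesis on `ρ` says `ρ = r ⇀ -`,
and on `M ⊗ M ⊗ M` the operators `R₁₂, R₁₃, R₂₃` are the hit actions of the legs
`r₁₂, r₁₃, r₂₃`. Hit actions turn convolution into composition and are natural along coalgebra
maps. Cocommutativity of `M` makes the convolution algebra of `M ⊗ M ⊗ M` commutative, which gives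
the Yang-Baxter equation at once. The bicharacter axioms say `r₁₂ r₁₃ = r ∘ m₂₃` and
`r₁₃ r₂₃ = r ∘ m₁₂`, and multiplication is a coalgebra map, whence compatibility with
multiplication. Compatibility with `1` is naturality along `a ↦ 1 ⊗ a` and `a ↦ a ⊗ 1`, along
which `r` pulls back to the counit.
-/

open WithConv

section Hit

variable {R C D : Type*} [CommSemiring R]
  [AddCommMonoid C] [Module R C] [AddCommMonoid D] [Module R D]

noncomputable def convTensor (φ : WithConv (C →ₗ[R] R)) (ψ : WithConv (D →ₗ[R] R)) :
    WithConv (C ⊗[R] D →ₗ[R] R) :=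
  toConv (LinearMap.mul' R R ∘ₗ TensorProduct.map φ.ofConv ψ.ofConv)

@[simp] lemma convTensor_tmul (φ : WithConv (C →ₗ[R] R)) (ψ : WithConv (D →ₗ[R] R))
    (c : C) (d : D) : convTensor φ ψ (c ⊗ₜ d) = φ c * ψ d := rfl

variable [Coalgebra R C] [Coalgebra R D]

noncomputable def hit (φ : WithConv (C →ₗ[R] R)) : C →ₗ[R] C :=
  TensorProduct.rid R C ∘ₗ φ.ofConv.lTensor C ∘ₗ comul

lemma Coalgebra.Repr.hit_apply {ι : Type*} {c : C} (𝓡 : Repr R c ι)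
    (φ : WithConv (C →ₗ[R] R)) : hit φ c = ∑ i ∈ 𝓡.index, φ (𝓡.right i) • 𝓡.left i := by
  simp [hit, ← 𝓡.eq]

lemma Coalgebra.Repr.sum_map_mul_counit {ι : Type*} {c : C} (𝓡 : Repr R c ι)
    (f : C →ₗ[R] R) : ∑ i ∈ 𝓡.index, f (𝓡.left i) * counit (𝓡.right i) = f c := by
  have h := congr(LinearMap.mul' R R $(sum_map_tmul_counit_eq f c (repr := 𝓡)))
  simpa only [map_sum, LinearMap.mul'_apply, mul_one] using h

lemma Coalgebra.Repr.sum_counit_mul_map {ι : Type*} {c : C} (𝓡 : Repr R c ι)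
    (f : C →ₗ[R] R) : ∑ i ∈ 𝓡.index, counit (𝓡.left i) * f (𝓡.right i) = f c := by
  have h := congr(LinearMap.mul' R R $(sum_counit_tmul_map_eq f c (repr := 𝓡)))
  simpa only [map_sum, LinearMap.mul'_apply, one_mul] using h

@[simp] lemma hit_one : hit (1 : WithConv (C →ₗ[R] R)) = LinearMap.id := by
  ext c
  simp [hit, LinearMap.convOne_def]

lemma hit_mul (φ ψ : WithConv (C →ₗ[R] R)) : hit (φ * ψ) = hit φ ∘ₗ hit ψ := by
  ext c
  have coassoc := congr(TensorProduct.rid R C (LinearMap.lTensor C (LinearMap.mul' R R ∘ₗ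
    TensorProduct.map φ.ofConv ψ.ofConv) $(sum_tmul_tmul_eq (ℛ R c)
      (fun i => ℛ R ((ℛ R c).left i)) (fun i => ℛ R ((ℛ R c).right i)))))
  simp only [map_sum, LinearMap.lTensor_tmul, LinearMap.comp_apply, TensorProduct.map_tmul,
    LinearMap.mul'_apply, TensorProduct.rid_tmul] at coassoc
  rw [LinearMap.comp_apply, (ℛ R c).hit_apply, (ℛ R c).hit_apply, map_sum]
  simp only [(ℛ R _).convMul_apply, Finset.sum_smul]
  rw [← coassoc]
  refine Finset.sum_congr rfl fun i _ => ?_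
  rw [map_smul, (ℛ R _).hit_apply, Finset.smul_sum]
  refine Finset.sum_congr rfl fun j _ => ?_
  rw [smul_smul, mul_comm]

lemma coalgHom_comp_hit (g : C →ₗc[R] D) (φ : WithConv (D →ₗ[R] R)) :
    (g : C →ₗ[R] D) ∘ₗ hit (toConv (φ.ofConv ∘ₗ g)) = hit φ ∘ₗ g := by
  ext c
  simp [(ℛ R c).hit_apply, ((ℛ R c).induced g).hit_apply]

lemma hit_convTensor (φ : WithConv (C →ₗ[R] R)) (ψ : WithConv (D →ₗ[R] R)) :
    hit (convTensor φ ψ) = TensorProduct.map (hit φ) (hit ψ) := by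
  ext c d
  simp [convTensor, hit, ← (ℛ R c).eq, ← (ℛ R d).eq, TensorProduct.sum_tmul,
    TensorProduct.tmul_sum, Finset.smul_sum, ← TensorProduct.smul_tmul', mul_smul,
    smul_comm (φ _)]

end Hit

section Legs

variable {R M : Type} [CommRing R] [AddCommGroup M] [Module R M]

@[simp] lemma swap23_tmul (x y z : M) :
    swap23 R M (x ⊗ₜ (y ⊗ₜ z)) = x ⊗ₜ (z ⊗ₜ y) := rfl

variable [Coalgebra R M]

noncomputable def leg12 (φ : WithConv (M ⊗[R] M →ₗ[R] R)) :
    WithConv (M ⊗[R] (M ⊗[R] M) →ₗ[R] R) :=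
  toConv ((convTensor φ 1).ofConv ∘ₗ (TensorProduct.assoc R M M M).symm.toLinearMap)

noncomputable def leg23 (φ : WithConv (M ⊗[R] M →ₗ[R] R)) :
    WithConv (M ⊗[R] (M ⊗[R] M) →ₗ[R] R) :=
  convTensor 1 φ

@[simp] lemma leg12_tmul (φ : WithConv (M ⊗[R] M →ₗ[R] R)) (x y z : M) :
    leg12 φ (x ⊗ₜ (y ⊗ₜ z)) = φ (x ⊗ₜ y) * counit (R := R) z := by
  simp [leg12]

@[simp] lemma leg23_tmul (φ : WithConv (M ⊗[R] M →ₗ[R] R)) (x y z : M) :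
    leg23 φ (x ⊗ₜ (y ⊗ₜ z)) = counit (R := R) x * φ (y ⊗ₜ z) := by
  simp [leg23]

lemma map23_hit (φ : WithConv (M ⊗[R] M →ₗ[R] R)) : map23 R M (hit φ) = hit (leg23 φ) := by
  rw [leg23, hit_convTensor, hit_one]
  rfl

lemma map12_hit (φ : WithConv (M ⊗[R] M →ₗ[R] R)) : map12 R M (hit φ) = hit (leg12 φ) := by
  have h := coalgHom_comp_hit (Coalgebra.TensorProduct.assoc R R M M M).symm.toCoalgHom
    (convTensor φ 1)
  rw [hit_convTensor, hit_one] at h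
  ext x y z
  apply (TensorProduct.assoc R M M M).symm.injective
  simpa [map12, leg12, AlgebraTensorModule.assoc_eq] using congr($h (x ⊗ₜ (y ⊗ₜ z))).symm

end Legs

section Bialgebra

variable {R M : Type} [CommRing R] [Ring M] [Bialgebra R M]

noncomputable def leg13 (φ : WithConv (M ⊗[R] M →ₗ[R] R)) :
    WithConv (M ⊗[R] (M ⊗[R] M) →ₗ[R] R) :=
  toConv ((leg12 φ).ofConv ∘ₗ swap23 R M)

@[simp] lemma leg13_tmul (φ : WithConv (M ⊗[R] M →ₗ[R] R)) (x y z : M) :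
    leg13 φ (x ⊗ₜ (y ⊗ₜ z)) = φ (x ⊗ₜ z) * counit (R := R) y := by
  simp [leg13]

lemma map13_hit (φ : WithConv (M ⊗[R] M →ₗ[R] R)) : map13 R M (hit φ) = hit (leg13 φ) := by
  let swap : M ⊗[R] (M ⊗[R] M) →ₗc[R] M ⊗[R] (M ⊗[R] M) :=
    CoalgHom.lTensor M (Bialgebra.TensorProduct.comm R M M : M ⊗[R] M →ₗc[R] M ⊗[R] M)
  have hswap : (swap : M ⊗[R] (M ⊗[R] M) →ₗ[R] M ⊗[R] (M ⊗[R] M)) = swap23 R M := by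
    ext; rfl
  have h := coalgHom_comp_hit swap (leg12 φ)
  rw [hswap] at h
  have swap23_involutive : swap23 R M ∘ₗ swap23 R M = LinearMap.id := by ext; simp
  rw [map13, map12_hit, ← h, leg13, ← LinearMap.comp_assoc, swap23_involutive,
    LinearMap.id_comp]

lemma mul23_comp_hit (φ : WithConv (M ⊗[R] M →ₗ[R] R)) :
    mul23 R M (LinearMap.mul' R M) ∘ₗ hit (toConv (φ.ofConv ∘ₗ mul23 R M (LinearMap.mul' R M))) =
      hit φ ∘ₗ mul23 R M (LinearMap.mul' R M) :=
  coalgHom_comp_hit (CoalgHom.lTensor M (Bialgebra.mulCoalgHom R M)) φ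

lemma mul12_comp_hit (φ : WithConv (M ⊗[R] M →ₗ[R] R)) :
    mul12 R M (LinearMap.mul' R M) ∘ₗ hit (toConv (φ.ofConv ∘ₗ mul12 R M (LinearMap.mul' R M))) =
      hit φ ∘ₗ mul12 R M (LinearMap.mul' R M) :=
  coalgHom_comp_hit ((CoalgHom.rTensor M (Bialgebra.mulCoalgHom R M)).comp
    (Coalgebra.TensorProduct.assoc R R M M M).symm.toCoalgHom) φ

end Bialgebra

namespace Bicharacter

variable {R M : Type} [CommRing R] [Ring M] [Bialgebra R M] (r : Bicharacter R M)

noncomputable def lift : WithConv (M ⊗[R] M →ₗ[R] R) := toConv (TensorProduct.lift r.toFun)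

@[simp] lemma lift_tmul (a b : M) : r.lift (a ⊗ₜ b) = r.toFun a b := rfl

lemma hit_lift_tmul {a b : M} {ι κ : Type*} (𝓡a : Repr R a ι) (𝓡b : Repr R b κ) :
    hit r.lift (a ⊗ₜ b) = ∑ i ∈ 𝓡a.index, ∑ j ∈ 𝓡b.index,
      r.toFun (𝓡a.right i) (𝓡b.right j) • (𝓡a.left i ⊗ₜ 𝓡b.left j) := by
  rw [(𝓡a.tmul 𝓡b).hit_apply, Repr.tmul_index, Finset.sum_product]
  rfl

lemma hit_lift_one_tmul (a : M) : hit r.lift ((1 : M) ⊗ₜ[R] a) = 1 ⊗ₜ a := by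
  let includeRight : M →ₗc[R] M ⊗[R] M :=
    (Coalgebra.TensorProduct.map (Bialgebra.unitBialgHom R M : R →ₗc[R] M) (CoalgHom.id R M)).comp
      (Coalgebra.TensorProduct.lid R M).symm.toCoalgHom
  have h_one_left : toConv (r.lift.ofConv ∘ₗ (includeRight : M →ₗ[R] M ⊗[R] M)) = 1 :=
    WithConv.ext (LinearMap.ext fun a => by simp [includeRight, r.one_left])
  have h := congr($(coalgHom_comp_hit includeRight r.lift) a)
  rw [h_one_left, hit_one] at h
  simpa [includeRight] using h.symm

lemma hit_lift_tmul_one (a : M) : hit r.lift (a ⊗ₜ[R] (1 : M)) = a ⊗ₜ 1 := by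
  let includeLeft : M →ₗc[R] M ⊗[R] M :=
    (Coalgebra.TensorProduct.map (CoalgHom.id R M) (Bialgebra.unitBialgHom R M : R →ₗc[R] M)).comp
      (Coalgebra.TensorProduct.rid R R M).symm.toCoalgHom
  have h_one_right : toConv (r.lift.ofConv ∘ₗ (includeLeft : M →ₗ[R] M ⊗[R] M)) = 1 :=
    WithConv.ext (LinearMap.ext fun a => by simp [includeLeft, r.one_right])
  have h := congr($(coalgHom_comp_hit includeLeft r.lift) a)
  rw [h_one_right, hit_one] at h
  simpa [includeLeft] using h.symm

lemma leg12_mul_leg13 :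
    leg12 r.lift * leg13 r.lift = toConv (r.lift.ofConv ∘ₗ mul23 R M (LinearMap.mul' R M)) := by
  refine WithConv.ext (TensorProduct.ext_threefold' fun x y z => ?_)
  rw [((ℛ R x).tmul ((ℛ R y).tmul (ℛ R z))).convMul_apply]
  simp only [Repr.tmul_index, Finset.sum_product, Repr.tmul_left, Repr.tmul_right, leg12_tmul,
    leg13_tmul, lift_tmul, mul23, LinearMap.coe_comp, Function.comp_apply,
    LinearMap.lTensor_tmul, LinearMap.mul'_apply]
  rw [r.mul_right x y z _ (ℛ R x).index _ _ (ℛ R x).eq.symm]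
  refine Finset.sum_congr rfl fun i _ => ?_
  rw [← (ℛ R y).sum_map_mul_counit (r.toFun _), ← (ℛ R z).sum_counit_mul_map (r.toFun _),
    Finset.sum_mul_sum]
  refine Finset.sum_congr rfl fun j _ => Finset.sum_congr rfl fun k _ => ?_
  ring

lemma leg13_mul_leg23 :
    leg13 r.lift * leg23 r.lift = toConv (r.lift.ofConv ∘ₗ mul12 R M (LinearMap.mul' R M)) := by
  refine WithConv.ext (TensorProduct.ext_threefold' fun x y z => ?_)
  rw [((ℛ R x).tmul ((ℛ R y).tmul (ℛ R z))).convMul_apply]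
  simp only [Repr.tmul_index, Finset.sum_product, Repr.tmul_left, Repr.tmul_right, leg13_tmul,
    leg23_tmul, lift_tmul, mul12, LinearMap.coe_comp, LinearEquiv.coe_coe, Function.comp_apply,
    assoc_symm_tmul, LinearMap.rTensor_tmul, LinearMap.mul'_apply]
  have hx (w : M) : r.toFun x w =
      ∑ i ∈ (ℛ R x).index, r.toFun ((ℛ R x).left i) w * counit ((ℛ R x).right i) :=
    ((ℛ R x).sum_map_mul_counit (r.toFun.flip w)).symm
  have hy (w : M) : r.toFun y w =
      ∑ j ∈ (ℛ R y).index, counit ((ℛ R y).left j) * r.toFun ((ℛ R y).right j) w :=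
    ((ℛ R y).sum_counit_mul_map (r.toFun.flip w)).symm
  rw [r.mul_left x y z _ (ℛ R z).index _ _ (ℛ R z).eq.symm]
  simp only [hx, hy, Finset.sum_mul_sum]
  refine (Finset.sum_congr rfl fun i _ => Finset.sum_comm).trans (Finset.sum_comm.trans
    (Finset.sum_congr rfl fun k _ => Finset.sum_congr rfl fun i _ =>
      Finset.sum_congr rfl fun j _ => ?_))
  ring

end Bicharacter

theorem bicharacter_R_matrix (R M : Type) [CommRing R] [Ring M] [Bialgebra R M]
    (hcoc : ∀ a : M, TensorProduct.comm R M M (comul (R := R) a) = comul (R := R) a)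
    (r : Bicharacter R M)
    (ρ : M ⊗[R] M →ₗ[R] M ⊗[R] M)
    (hρ : ∀ (a b : M) (ι κ : Type) (t : Finset ι) (u : Finset κ)
      (a₁ a₂ : ι → M) (b₁ b₂ : κ → M),
      comul (R := R) a = ∑ i ∈ t, a₁ i ⊗ₜ[R] a₂ i →
      comul (R := R) b = ∑ j ∈ u, b₁ j ⊗ₜ[R] b₂ j →
      ρ (a ⊗ₜ[R] b) = ∑ i ∈ t, ∑ j ∈ u, r.toFun (a₂ i) (b₂ j) • (a₁ i ⊗ₜ[R] b₁ j)) :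
    (∀ a : M, ρ ((1 : M) ⊗ₜ[R] a) = (1 : M) ⊗ₜ[R] a) ∧
    (∀ a : M, ρ (a ⊗ₜ[R] (1 : M)) = a ⊗ₜ[R] (1 : M)) ∧
    (mul23 R M (LinearMap.mul' R M) ∘ₗ map12 R M ρ ∘ₗ map13 R M ρ
      = ρ ∘ₗ mul23 R M (LinearMap.mul' R M)) ∧
    (mul12 R M (LinearMap.mul' R M) ∘ₗ map23 R M ρ ∘ₗ map13 R M ρ
      = ρ ∘ₗ mul12 R M (LinearMap.mul' R M)) ∧
    (map12 R M ρ ∘ₗ map13 R M ρ ∘ₗ map23 R M ρ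
      = map23 R M ρ ∘ₗ map13 R M ρ ∘ₗ map12 R M ρ) := by
  have : Coalgebra.IsCocomm R M := ⟨LinearMap.ext hcoc⟩
  obtain rfl : ρ = hit r.lift := TensorProduct.ext' fun a b =>
    (hρ a b _ _ _ _ _ _ _ _ (ℛ R a).eq.symm (ℛ R b).eq.symm).trans
      (r.hit_lift_tmul (ℛ R a) (ℛ R b)).symm
  refine ⟨r.hit_lift_one_tmul, r.hit_lift_tmul_one, ?_, ?_, ?_⟩
  · rw [map12_hit, map13_hit, ← hit_mul, r.leg12_mul_leg13, mul23_comp_hit]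
  · rw [map23_hit, map13_hit, ← hit_mul, mul_comm, r.leg13_mul_leg23, mul12_comp_hit]
  · simp only [map12_hit, map13_hit, map23_hit, ← hit_mul]
    congr 1
    ring
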